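/- Fix m, δ, I > 0 and consider the open set Q = {(v, n) ∈ ℝ³ × ℝ³ : δ M > N₁² + N₂²}, where n = (N₁, N₂, M). Then on Q one has det 𝕀(n) = (m+δ)((m+δ)I + mM + (δM − (N₁² + N₂²))) > 0, the matrix 𝕀(n) is invertible, and the vector field X(v, n) = (𝕀(n)⁻¹ 𝐦(v, n), 𝕁(n) v) on Q ⊂ ℝ⁶ satisfies the divergence identity div(√(det 𝕀(n)) · X) = 0 on Q (divergence taken with respect to the six coordinates (v_x, v_y, v_φ, N₁, N₂, M)). Hence the reduced planar ball bearing system possesses the invariant measure √(det 𝕀) dv_x ∧ dv_y ∧ dv_φ ∧ dN₁ ∧ dN₂ ∧ dM. -/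

import Mathlib

open Matrix

/-- The matrix `𝕀(n)` of the reduced planar ball bearing problem, for
`n = (N₁, N₂, M)`. -/
noncomputable def planarInertia (m δ I : ℝ) (n : Fin 3 → ℝ) : Matrix (Fin 3) (Fin 3) ℝ :=
  !![m + δ, 0, -n 1; 0, m + δ, n 0; -n 1, n 0, I + n 2]

/-- The matrix `𝕁(n)` of the reduced planar ball bearing problem. -/
noncomputable def planarJ (δ : ℝ) (n : Fin 3 → ℝ) : Matrix (Fin 3) (Fin 3) ℝ :=
  (-(1 / 2 : ℝ)) • !![δ, 0, n 1; 0, δ, -n 0; 2 * n 0, 2 * n 1, 0]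

/-- The right-hand side `𝐦(v, n)` of the reduced planar ball bearing problem, for
`v = (v_x, v_y, v_φ)` and `n = (N₁, N₂, M)`. -/
noncomputable def planarRHS (δ : ℝ) (v n : Fin 3 → ℝ) : Fin 3 → ℝ :=
  (1 / 2 : ℝ) • ![n 0 * v 2 ^ 2 - δ * v 2 * v 1,
    n 1 * v 2 ^ 2 + δ * v 2 * v 0,
    v 2 * (n 0 * v 0 + n 1 * v 1)]

/-- The reduced planar ball bearing vector field
`X(v, n) = (𝕀(n)⁻¹ 𝐦(v, n), 𝕁(n) v)` on `ℝ³ × ℝ³`. -/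
noncomputable def planarField (m δ I : ℝ) (p : (Fin 3 → ℝ) × (Fin 3 → ℝ)) :
    (Fin 3 → ℝ) × (Fin 3 → ℝ) :=
  ((planarInertia m δ I p.2)⁻¹.mulVec (planarRHS δ p.1 p.2),
    (planarJ δ p.2).mulVec p.1)

/-- The divergence of a vector field on `ℝ³ × ℝ³ ≅ ℝ⁶`: the sum of the partial
derivatives of its six components with respect to the six coordinates. -/
noncomputable def divergence6 (Y : (Fin 3 → ℝ) × (Fin 3 → ℝ) → (Fin 3 → ℝ) × (Fin 3 → ℝ))
    (p : (Fin 3 → ℝ) × (Fin 3 → ℝ)) : ℝ :=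
  (∑ i : Fin 3, (fderiv ℝ Y p (Pi.single i 1, 0)).1 i)
    + ∑ i : Fin 3, (fderiv ℝ Y p (0, Pi.single i 1)).2 i

/-! Since `𝕀⁻¹ = (det 𝕀)⁻¹ • adj 𝕀` and `D = det 𝕀` depends on `n` only,
`√D • X = (D^{-1/2} • adj 𝕀 𝐦, D^{1/2} • 𝕁 v)`. The `i`-th component of `𝕁 v` does not involve
`nᵢ`, so `div (√D • X) = D^{-1/2} (div_v (adj 𝕀 𝐦) + ½ ∇D · 𝕁 v)`, and the two summands are
`± ½ m (m + δ) (N₁ v_x + N₂ v_y)`. -/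

lemma ContinuousLinearMap.apply_fderiv_eq_of_hasLineDerivAt {𝕜 E F G : Type*}
    [NontriviallyNormedField 𝕜] [NormedAddCommGroup E] [NormedSpace 𝕜 E]
    [NormedAddCommGroup F] [NormedSpace 𝕜 F] [NormedAddCommGroup G] [NormedSpace 𝕜 G]
    (π : F →L[𝕜] G) {Y : E → F} {p u : E} (hY : DifferentiableAt 𝕜 Y p) {c : G}
    (h : HasLineDerivAt 𝕜 (fun q => π (Y q)) c p u) :
    π (fderiv 𝕜 Y p u) = c :=
  ((π.hasFDerivAt.comp p hY.hasFDerivAt).hasLineDerivAt u).unique h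

section

variable {𝕜 E ι κ : Type*} [NontriviallyNormedField 𝕜] [NormedAddCommGroup E] [NormedSpace 𝕜 E]
  [Fintype ι] [Fintype κ] {Y : E → (ι → 𝕜) × (κ → 𝕜)} {p u : E} {c : 𝕜}

lemma fderiv_fst_apply_eq_of_hasLineDerivAt (hY : DifferentiableAt 𝕜 Y p) (i : ι)
    (h : HasLineDerivAt 𝕜 (fun q => (Y q).1 i) c p u) : (fderiv 𝕜 Y p u).1 i = c :=
  ((ContinuousLinearMap.proj i).comp
    (ContinuousLinearMap.fst 𝕜 _ _)).apply_fderiv_eq_of_hasLineDerivAt hY h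

lemma fderiv_snd_apply_eq_of_hasLineDerivAt (hY : DifferentiableAt 𝕜 Y p) (i : κ)
    (h : HasLineDerivAt 𝕜 (fun q => (Y q).2 i) c p u) : (fderiv 𝕜 Y p u).2 i = c :=
  ((ContinuousLinearMap.proj i).comp
    (ContinuousLinearMap.snd 𝕜 _ _)).apply_fderiv_eq_of_hasLineDerivAt hY h

end

lemma hasDerivAt_zero_of_eq_quadratic {f : ℝ → ℝ} {b c : ℝ}
    (h : ∀ t, f t = f 0 + b * t + c * t ^ 2) : HasDerivAt f b 0 := by
  rw [funext h]
  simpa using (((hasDerivAt_id (0 : ℝ)).const_mul b).const_add (f 0)).fun_add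
    ((hasDerivAt_pow 2 (0 : ℝ)).const_mul c)

noncomputable def planarInertiaDet (m δ I : ℝ) (n : Fin 3 → ℝ) : ℝ :=
  (m + δ) * ((m + δ) * I + m * n 2 + (δ * n 2 - (n 0 ^ 2 + n 1 ^ 2)))

noncomputable def planarScaledField (m δ I : ℝ) (q : (Fin 3 → ℝ) × (Fin 3 → ℝ)) :
    (Fin 3 → ℝ) × (Fin 3 → ℝ) :=
  ((√(planarInertiaDet m δ I q.2))⁻¹ •
      ((planarInertia m δ I q.2).adjugate *ᵥ planarRHS δ q.1 q.2),
    √(planarInertiaDet m δ I q.2) • (planarJ δ q.2 *ᵥ q.1))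

lemma det_planarInertia (m δ I : ℝ) (n : Fin 3 → ℝ) :
    (planarInertia m δ I n).det = planarInertiaDet m δ I n := by
  simp [planarInertia, planarInertiaDet, det_fin_three]
  ring

@[fun_prop]
lemma differentiable_planarInertiaDet (m δ I : ℝ) :
    Differentiable ℝ fun n => planarInertiaDet m δ I n := by
  unfold planarInertiaDet
  fun_prop

lemma inv_planarInertia (m δ I : ℝ) (n : Fin 3 → ℝ) :
    (planarInertia m δ I n)⁻¹ =
      (planarInertiaDet m δ I n)⁻¹ • (planarInertia m δ I n).adjugate := by
  rw [inv_def, Ring.inverse_eq_inv', det_planarInertia]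

-- Holds for every `q`: where `det 𝕀 ≤ 0` both sides vanish, since then `√(det 𝕀) = 0`.
lemma sqrt_det_smul_planarField (m δ I : ℝ) :
    (fun q => √(planarInertia m δ I q.2).det • planarField m δ I q) =
      planarScaledField m δ I := by
  funext q
  rw [det_planarInertia, planarField, inv_planarInertia, smul_mulVec, Prod.smul_mk, smul_smul,
    ← div_eq_mul_inv, Real.sqrt_div_self', one_div]
  rfl

lemma planarJ_add_smul_single_mulVec_apply (δ : ℝ) (n v : Fin 3 → ℝ) (t : ℝ) (i : Fin 3) :
    (planarJ δ (n + t • Pi.single i 1) *ᵥ v) i = (planarJ δ n *ᵥ v) i := by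
  fin_cases i <;> simp [planarJ, mulVec, dotProduct, Fin.sum_univ_three]

lemma hasLineDerivAt_planarInertiaDet (m δ I : ℝ) (n : Fin 3 → ℝ) (i : Fin 3) :
    HasLineDerivAt ℝ (planarInertiaDet m δ I)
      (![-2 * (m + δ) * n 0, -2 * (m + δ) * n 1, (m + δ) ^ 2] i) n (Pi.single i 1) := by
  refine hasDerivAt_zero_of_eq_quadratic (c := ![-(m + δ), -(m + δ), 0] i) fun t => ?_
  fin_cases i <;> simp [planarInertiaDet] <;> ring

section

variable {m δ I : ℝ}

lemma planarInertiaDet_pos (hm : 0 < m) (hδ : 0 < δ) (hI : 0 < I) {n : Fin 3 → ℝ}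
    (hn : n 0 ^ 2 + n 1 ^ 2 < δ * n 2) : 0 < planarInertiaDet m δ I n := by
  have hM : 0 < n 2 := pos_of_mul_pos_right ((by positivity : (0 : ℝ) ≤ _).trans_lt hn) hδ.le
  have hgap := sub_pos.2 hn
  unfold planarInertiaDet
  positivity

variable (p : (Fin 3 → ℝ) × (Fin 3 → ℝ))

lemma hasLineDerivAt_planarScaledField_fst (i : Fin 3) :
    HasLineDerivAt ℝ (fun q => (planarScaledField m δ I q).1 i)
      ((√(planarInertiaDet m δ I p.2))⁻¹ * (m / 2 * ![p.1 2 * p.2 0 * p.2 1,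
        -(p.1 2 * p.2 0 * p.2 1), (m + δ) * (p.1 0 * p.2 0 + p.1 1 * p.2 1)] i))
      p (Pi.single i 1, 0) := by
  fin_cases i <;>
    exact hasDerivAt_zero_of_eq_quadratic (c := 0) fun t => by
      simp [planarScaledField, planarInertia, adjugate_fin_three, planarRHS]
      ring

lemma hasLineDerivAt_planarScaledField_snd (hD : planarInertiaDet m δ I p.2 ≠ 0) (i : Fin 3) :
    HasLineDerivAt ℝ (fun q => (planarScaledField m δ I q).2 i)
      (![-2 * (m + δ) * p.2 0, -2 * (m + δ) * p.2 1, (m + δ) ^ 2] i /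
        (2 * √(planarInertiaDet m δ I p.2)) * (planarJ δ p.2 *ᵥ p.1) i)
      p (0, Pi.single i 1) := by
  have h := ((hasLineDerivAt_planarInertiaDet m δ I p.2 i).sqrt (by simpa using hD)).mul_const
    ((planarJ δ p.2 *ᵥ p.1) i)
  simp only [zero_smul, add_zero] at h
  refine h.congr_of_eventuallyEq (Filter.Eventually.of_forall fun t => ?_)
  simp [planarScaledField, planarJ_add_smul_single_mulVec_apply]

lemma differentiableAt_planarScaledField (hD : 0 < planarInertiaDet m δ I p.2) :
    DifferentiableAt ℝ (planarScaledField m δ I) p := by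
  have hD' := hD.ne'
  have hsqrt := (Real.sqrt_pos.2 hD).ne'
  refine DifferentiableAt.prodMk (differentiableAt_pi.2 fun i => ?_)
    (differentiableAt_pi.2 fun i => ?_) <;> fin_cases i <;>
    simp [planarInertia, adjugate_fin_three, planarRHS, planarJ, vecHead, vecTail] <;>
    fun_prop (disch := assumption)

lemma divergence6_planarScaledField (hD : 0 < planarInertiaDet m δ I p.2) :
    divergence6 (planarScaledField m δ I) p = 0 := by
  have hY := differentiableAt_planarScaledField p hD
  have hv (i : Fin 3) := fderiv_fst_apply_eq_of_hasLineDerivAt hY i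
    (hasLineDerivAt_planarScaledField_fst p i)
  have hn (i : Fin 3) := fderiv_snd_apply_eq_of_hasLineDerivAt hY i
    (hasLineDerivAt_planarScaledField_snd p hD.ne' i)
  simp only [divergence6, hv, hn, Fin.sum_univ_three]
  simp [planarJ, vecHead, vecTail]
  field_simp
  ring

end

theorem planar_ball_bearing_invariant_measure
    (m δ I : ℝ) (hm : 0 < m) (hδ : 0 < δ) (hI : 0 < I) :
    ∀ p : (Fin 3 → ℝ) × (Fin 3 → ℝ),
      δ * p.2 2 > p.2 0 ^ 2 + p.2 1 ^ 2 →
      ((planarInertia m δ I p.2).det =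
          (m + δ) * ((m + δ) * I + m * p.2 2 + (δ * p.2 2 - (p.2 0 ^ 2 + p.2 1 ^ 2))) ∧
        0 < (planarInertia m δ I p.2).det ∧
        IsUnit (planarInertia m δ I p.2) ∧
        divergence6
          (fun q => Real.sqrt ((planarInertia m δ I q.2).det) • planarField m δ I q)
          p = 0) := by
  intro p hp
  have hD := planarInertiaDet_pos hm hδ hI hp
  rw [det_planarInertia]
  exact ⟨rfl, hD, (isUnit_iff_isUnit_det _).2 (by rw [det_planarInertia]; exact hD.ne'.isUnit),
    by rw [sqrt_det_smul_planarField]; exact divergence6_planarScaledField p hD⟩
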